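/- For any n₂ ≥ 1 and any configuration η ∈ V*,n₂ ∖ V*,n₂^{4n₂} whose occupied sites form a single cluster, there exists a configuration η̃ ∈ V*,n₂^{4n₂} with H(η̃) < H(η). (One may take η̃ to agree with η on the support of η and to have, in addition, a particle of type 1 at every empty site adjacent to a particle of type 2 of η.) -/

import Mathlib

/- Common framework: two-type Kawasaki dynamics on a finite box in ℤ². -/

abbrev Site := ℤ × ℤ
abbrev Cell := ℤ × ℤ

/-- Nearest-neighbour adjacency on ℤ². -/
def adjacent (x y : Site) : Prop := |x.1 - y.1| + |x.2 - y.2| = 1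

instance (x y : Site) : Decidable (adjacent x y) :=
  inferInstanceAs (Decidable (|x.1 - y.1| + |x.2 - y.2| = 1))

/-- The four nearest neighbours of a site. -/
def nbrs (x : Site) : Finset Site :=
  {(x.1 + 1, x.2), (x.1 - 1, x.2), (x.1, x.2 + 1), (x.1, x.2 - 1)}

/-- Internal boundary ∂⁻Λ of a finite set Λ ⊂ ℤ². -/
def intBdry (Λ : Finset Site) : Finset Site := Λ.filter (fun x => ¬ nbrs x ⊆ Λ)

/-- Λ⁻ = Λ ∖ ∂⁻Λ. -/
def inner1 (Λ : Finset Site) : Finset Site := Λ \ intBdry Λ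

/-- Λ⁻⁻ = Λ⁻ ∖ ∂⁻Λ⁻. -/
def inner2 (Λ : Finset Site) : Finset Site := inner1 Λ \ intBdry (inner1 Λ)

/-- A configuration on Λ: each site of Λ carries 0 (empty), 1 (type 1) or 2 (type 2);
sites outside Λ are empty. -/
structure Config (Λ : Finset Site) where
  val : Site → Fin 3
  zero_outside : ∀ x, x ∉ Λ → val x = 0

/-- Number of particles of type 1. -/
def numType1 {Λ : Finset Site} (η : Config Λ) : ℕ := (Λ.filter (fun x => η.val x = 1)).card

/-- Number of particles of type 2. -/
def numType2 {Λ : Finset Site} (η : Config Λ) : ℕ := (Λ.filter (fun x => η.val x = 2)).card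

/-- Number of active bonds: unordered n.n. pairs of sites of Λ⁻, one carrying a 1 and the
other a 2 (each such unordered pair is counted once, as the ordered pair (type1,type2)). -/
def numBonds {Λ : Finset Site} (η : Config Λ) : ℕ :=
  ((inner1 Λ ×ˢ inner1 Λ).filter
    (fun p => adjacent p.1 p.2 ∧ η.val p.1 = 1 ∧ η.val p.2 = 2)).card

/-- The Hamiltonian H(η) = −U·B(η) + Δ1·n1(η) + Δ2·n2(η). -/
noncomputable def energy (U Δ1 Δ2 : ℝ) {Λ : Finset Site} (η : Config Λ) : ℝ :=
  -U * numBonds η + Δ1 * numType1 η + Δ2 * numType2 η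

/-- Allowed moves of the Kawasaki dynamics: hopping inside Λ, creation and annihilation
at the internal boundary. -/
def Communicates {Λ : Finset Site} (η η' : Config Λ) : Prop :=
  (∃ x ∈ Λ, ∃ y ∈ Λ, adjacent x y ∧ η.val x = 0 ∧ η.val y ≠ 0 ∧
      η'.val = Function.update (Function.update η.val x (η.val y)) y 0) ∨
  (∃ x ∈ intBdry Λ, ∃ v : Fin 3, v ≠ 0 ∧ η.val x = 0 ∧
      η'.val = Function.update η.val x v) ∨
  (∃ x ∈ intBdry Λ, η.val x ≠ 0 ∧ η'.val = Function.update η.val x 0)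

/-- ω is a path of allowed moves from η to η′. -/
def IsPath {Λ : Finset Site} (ω : List (Config Λ)) (η η' : Config Λ) : Prop :=
  ω.head? = some η ∧ ω.getLast? = some η' ∧ ω.Chain' Communicates

/-- Communication height between two sets of configurations:
Φ(A,B) = min over paths from A to B of the maximal energy along the path. -/
noncomputable def commHeightSet (U Δ1 Δ2 : ℝ) {Λ : Finset Site}
    (A B : Set (Config Λ)) : ℝ :=
  sInf {m : ℝ | ∃ η ∈ A, ∃ η' ∈ B, ∃ ω : List (Config Λ),
    IsPath ω η η' ∧ ∀ ξ ∈ ω, energy U Δ1 Δ2 ξ ≤ m}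

/-- Communication height Φ(η,η′). -/
noncomputable def commHeight (U Δ1 Δ2 : ℝ) {Λ : Finset Site} (η η' : Config Λ) : ℝ :=
  commHeightSet U Δ1 Δ2 {η} {η'}

/-- Stability level V_η = Φ(η, I_η) − H(η), where I_η = {ξ : H(ξ) < H(η)}. -/
noncomputable def stabLevel (U Δ1 Δ2 : ℝ) {Λ : Finset Site} (η : Config Λ) : ℝ :=
  commHeightSet U Δ1 Δ2 {η} {ξ : Config Λ | energy U Δ1 Δ2 ξ < energy U Δ1 Δ2 η}
    - energy U Δ1 Δ2 η

/-- The set of stable configurations (global minimizers of H). -/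
def Xstab (U Δ1 Δ2 : ℝ) (Λ : Finset Site) : Set (Config Λ) :=
  {η | ∀ ξ : Config Λ, energy U Δ1 Δ2 η ≤ energy U Δ1 Δ2 ξ}

/-- The set of metastable configurations (non-stable configurations of maximal
stability level). -/
def Xmeta (U Δ1 Δ2 : ℝ) (Λ : Finset Site) : Set (Config Λ) :=
  {η | η ∉ Xstab U Δ1 Δ2 Λ ∧
    ∀ ξ : Config Λ, ξ ∉ Xstab U Δ1 Δ2 Λ → stabLevel U Δ1 Δ2 ξ ≤ stabLevel U Δ1 Δ2 η}

/-- The empty configuration □. -/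
def emptyConfig (Λ : Finset Site) : Config Λ := ⟨fun _ => 0, fun _ _ => rfl⟩

/-- The critical length ℓ* = ⌈Δ1/(4U − Δ1 − Δ2)⌉. -/
noncomputable def lstar (U Δ1 Δ2 : ℝ) : ℤ := ⌈Δ1 / (4 * U - Δ1 - Δ2)⌉

/-- The box Λ: in dual coordinates u(x) = ((x1−x2)/2,(x1+x2)/2) the
(L+3/2)×(L+3/2) square centered at the origin, i.e. |x1−x2| ≤ L+1 and |x1+x2| ≤ L+1. -/
noncomputable def latBox (L : ℕ) : Finset Site :=
  (Finset.Icc (-(L : ℤ) - 1) ((L : ℤ) + 1) ×ˢ Finset.Icc (-(L : ℤ) - 1) ((L : ℤ) + 1)).filter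
    (fun x => |x.1 - x.2| ≤ (L : ℤ) + 1 ∧ |x.1 + x.2| ≤ (L : ℤ) + 1)

/-- The m×n dual rectangle of sites (in dual coordinates) with dual lower-left corner p
(in standard coordinates): sites p + i·(1,−1) + j·(1,1) for 0 ≤ i < m, 0 ≤ j < n.
All these sites have the same parity. -/
def dualRect (p : Site) (m n : ℕ) : Finset Site :=
  (Finset.range m ×ˢ Finset.range n).image
    (fun ij => ((p.1 + (ij.1 : ℤ) + (ij.2 : ℤ), p.2 + (ij.2 : ℤ) - (ij.1 : ℤ)) : Site))

/-- The sites adjacent to a set S but not in S. -/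
def siteBorder (S : Finset Site) : Finset Site := S.biUnion nbrs \ S

/-- ⊞: the tb-tiled configurations whose particles of type 2 occupy an L×L square in dual
coordinates filling Λ⁻ (type-2 sites in Λ⁻⁻, surrounding type-1 sites in Λ⁻); these are
the two largest checkerboard droplets (one of each parity). -/
def boxPlus (L : ℕ) : Set (Config (latBox L)) :=
  {η | ∃ p : Site,
      (∀ x, η.val x = 2 ↔ x ∈ dualRect p L L) ∧
      (∀ x, η.val x = 1 ↔ x ∈ siteBorder (dualRect p L L)) ∧
      dualRect p L L ⊆ inner2 (latBox L) ∧
      siteBorder (dualRect p L L) ⊆ inner1 (latBox L)}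

/-- The active-bond relation between sites. -/
def bondRel {Λ : Finset Site} (η : Config Λ) (x y : Site) : Prop :=
  x ∈ inner1 Λ ∧ y ∈ inner1 Λ ∧ adjacent x y ∧
  ((η.val x = 1 ∧ η.val y = 2) ∨ (η.val x = 2 ∧ η.val y = 1))

/-- C is a cluster of η: a maximal connected component of the occupied sites under the
active-bond relation. -/
def IsCluster {Λ : Finset Site} (η : Config Λ) (C : Finset Site) : Prop :=
  ∃ x : Site, η.val x ≠ 0 ∧ ∀ y : Site, y ∈ C ↔ Relation.ReflTransGen (bondRel η) x y

/-- The occupied sites of η form a single cluster. -/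
def SingleCluster {Λ : Finset Site} (η : Config Λ) : Prop :=
  ∃ x : Site, η.val x ≠ 0 ∧
    ∀ y : Site, η.val y ≠ 0 → Relation.ReflTransGen (bondRel η) x y

/-- Dual coordinates, renormalized to land in ℤ² (within a fixed parity class this maps
dual neighbours to adjacent cells). -/
def cellOf (x : Site) : Cell := ((x.1 - x.2).fdiv 2, (x.1 + x.2).fdiv 2)

/-- The sites of Λ occupied by particles of type 2. -/
def type2Sites {Λ : Finset Site} (η : Config Λ) : Finset Site :=
  Λ.filter (fun x => η.val x = 2)

/-- Tile support of a configuration: the polyomino in dual coordinates given by the unit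
squares centered at the particles of type 2. -/
def tileSupport {Λ : Finset Site} (η : Config Λ) : Finset Cell :=
  (type2Sites η).image cellOf

/- ----------  Polyominoes ---------- -/

/-- Perimeter of a polyomino (number of boundary edges, inner boundaries included). -/
def perim (A : Finset Cell) : ℕ :=
  A.sum (fun c => ((nbrs c).filter (fun d => d ∉ A)).card)

def adjIn (A : Finset Cell) (x y : Cell) : Prop := x ∈ A ∧ y ∈ A ∧ adjacent x y

/-- Connectedness of a polyomino. -/
def PolyConnected (A : Finset Cell) : Prop :=
  A.Nonempty ∧ ∀ x ∈ A, ∀ y ∈ A, Relation.ReflTransGen (adjIn A) x y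

/-- Number of holes: bounded (= finite) connected components of the complement. -/
noncomputable def numHoles (A : Finset Cell) : ℕ :=
  Set.ncard {C : Set Cell | ∃ d : Cell, d ∉ A ∧
    C = {e : Cell | Relation.ReflTransGen (fun u v => adjacent u v ∧ u ∉ A ∧ v ∉ A) d e} ∧
    C.Finite}

/-- The four cells having lattice point v as a corner. -/
def cellsAt (v : Cell) : Finset Cell :=
  {(v.1 - 1, v.2 - 1), (v.1 - 1, v.2), (v.1, v.2 - 1), v}

/-- The lattice points that are corners of cells of A. -/
def vertexSet (A : Finset Cell) : Finset Cell :=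
  A.biUnion (fun c => {c, (c.1 + 1, c.2), (c.1, c.2 + 1), (c.1 + 1, c.2 + 1)})

def occAt (A : Finset Cell) (v : Cell) : ℕ := ((cellsAt v).filter (fun c => c ∈ A)).card

/-- Number of convex corners ψ(A): vertices with exactly one incident occupied cell. -/
def convexCorners (A : Finset Cell) : ℕ :=
  (vertexSet A).sum (fun v => if occAt A v = 1 then 1 else 0)

/-- Number of concave corners φ(A): a vertex with three incident occupied cells counts
once, a vertex with two diagonally opposite occupied cells counts twice. -/
def concaveCorners (A : Finset Cell) : ℕ :=
  (vertexSet A).sum (fun v =>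
    if occAt A v = 3 then 1
    else if occAt A v = 2 ∧ (((v.1 - 1, v.2 - 1) ∈ A ∧ v ∈ A) ∨
          ((v.1 - 1, v.2) ∈ A ∧ (v.1, v.2 - 1) ∈ A)) then 2
    else 0)

/-- T(A) = 2P(A) + ψ(A) − φ(A). -/
def Tpoly (A : Finset Cell) : ℤ :=
  2 * (perim A : ℤ) + (convexCorners A : ℤ) - (concaveCorners A : ℤ)

/-- For connected polyominoes, T(A) = 2P(A) + 4 − 4Q(A). -/
noncomputable def Tconn (A : Finset Cell) : ℤ :=
  2 * (perim A : ℤ) + 4 - 4 * (numHoles A : ℤ)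

/-- Width (number of columns) of the circumscribing rectangle. -/
def polyWidth (A : Finset Cell) : ℤ :=
  (WithBot.unbotD 0 (A.image Prod.fst).max) - (WithTop.untopD 0 (A.image Prod.fst).min) + 1

/-- Height (number of rows) of the circumscribing rectangle. -/
def polyHeight (A : Finset Cell) : ℤ :=
  (WithBot.unbotD 0 (A.image Prod.snd).max) - (WithTop.untopD 0 (A.image Prod.snd).min) + 1

/-- A polyomino is monotone if its perimeter equals the perimeter of its circumscribing
rectangle. -/
def MonotonePoly (A : Finset Cell) : Prop :=
  (perim A : ℤ) = 2 * (polyWidth A + polyHeight A)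

/-- The reference standard polyomino: an (l+ζ)×l rectangle (quasi-square, ζ ∈ {0,1})
with a bar of length k attached to a longest side, starting at offset a. -/
def baseStd (l ζ a k : ℕ) : Finset Cell :=
  ((Finset.range (l + ζ)) ×ˢ (Finset.range l)).image
      (fun q => (((q.1 : ℤ), (q.2 : ℤ)) : Cell))
    ∪ (Finset.range k).image (fun i => ((((a + i : ℕ) : ℤ), (l : ℤ)) : Cell))

/-- The eight symmetries of the square lattice. -/
def dihedralMaps : List (Cell → Cell) :=
  [fun c => (c.1, c.2), fun c => (-c.1, c.2), fun c => (c.1, -c.2), fun c => (-c.1, -c.2),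
   fun c => (c.2, c.1), fun c => (-c.2, c.1), fun c => (c.2, -c.1), fun c => (-c.2, -c.1)]

/-- A standard polyomino: a quasi-square with possibly a bar attached to one of its
longest sides (up to lattice symmetries and translations). -/
def IsStandardPoly (A : Finset Cell) : Prop :=
  ∃ l ζ a k : ℕ, 1 ≤ l ∧ ζ ≤ 1 ∧ a + k ≤ l + ζ ∧
    ∃ f ∈ dihedralMaps, ∃ t : Cell,
      A = (baseStd l ζ a k).image (fun c => (((f c).1 + t.1, (f c).2 + t.2) : Cell))

/- ----------  tb-tiled configurations ---------- -/

/-- V_{*,k}: configurations with exactly k particles of type 2, all lying in Λ⁻⁻. -/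
def VStar (Λ : Finset Site) (k : ℕ) : Set (Config Λ) :=
  {η | numType2 η = k ∧ ∀ x, η.val x = 2 → x ∈ inner2 Λ}

/-- V_{*,k}^{4k}: configurations of V_{*,k} with exactly 4k active bonds and no isolated
particle of type 1 (the tb-tiled configurations with k particles of type 2). -/
def VTiled (Λ : Finset Site) (k : ℕ) : Set (Config Λ) :=
  {η | η ∈ VStar Λ k ∧ numBonds η = 4 * k ∧
    ∀ x, η.val x = 1 → ∃ y ∈ nbrs x, η.val y = 2}

/-- All particles of type 2 have the same (site) parity. -/
def SameParity2 {Λ : Finset Site} (η : Config Λ) : Prop :=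
  ∀ x y : Site, η.val x = 2 → η.val y = 2 → (x.1 + x.2) % 2 = (y.1 + y.2) % 2

/-- A standard configuration: tile support a standard polyomino (all type-2 particles of
one parity). -/
def IsStandardConfig {Λ : Finset Site} (η : Config Λ) : Prop :=
  SameParity2 η ∧ IsStandardPoly (tileSupport η)

/-- A tb-tiled configuration: at least one particle of type 2, every particle of type 2
saturated, no isolated particle of type 1. -/
def IsTbTiled {Λ : Finset Site} (η : Config Λ) : Prop :=
  (∃ x, η.val x = 2) ∧
  (∀ x, η.val x = 2 → ∀ y ∈ nbrs x, η.val y = 1) ∧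
  (∀ x, η.val x = 1 → ∃ y ∈ nbrs x, η.val y = 2)

/-- η is the tb-tiled droplet with type-2 sites S: type-2 exactly on S, type-1 exactly
on the border of S, empty elsewhere. -/
def IsTbDroplet {Λ : Finset Site} (η : Config Λ) (S : Finset Site) : Prop :=
  (∀ x, η.val x = 2 ↔ x ∈ S) ∧ (∀ x, η.val x = 1 ↔ x ∈ siteBorder S)

/- ----------  cluster-wise quantities ---------- -/

def numType1In {Λ : Finset Site} (η : Config Λ) (C : Finset Site) : ℕ :=
  (C.filter (fun x => η.val x = 1)).card

def numType2In {Λ : Finset Site} (η : Config Λ) (C : Finset Site) : ℕ :=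
  (C.filter (fun x => η.val x = 2)).card

def numBondsIn {Λ : Finset Site} (η : Config Λ) (C : Finset Site) : ℕ :=
  ((C ×ˢ C).filter (fun q => q.1 ∈ inner1 Λ ∧ q.2 ∈ inner1 Λ ∧ adjacent q.1 q.2 ∧
    η.val q.1 = 1 ∧ η.val q.2 = 2)).card

def tileSupportIn {Λ : Finset Site} (η : Config Λ) (C : Finset Site) : Finset Cell :=
  (C.filter (fun x => η.val x = 2)).image cellOf

/-- Number of active bonds incident to the site x. -/
def bondDeg {Λ : Finset Site} (η : Config Λ) (x : Site) : ℕ :=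
  ((nbrs x).filter (fun y => x ∈ inner1 Λ ∧ y ∈ inner1 Λ ∧
    ((η.val x = 1 ∧ η.val y = 2) ∨ (η.val x = 2 ∧ η.val y = 1)))).card

/-- Number of missing bonds of the type-1 particles of C. -/
def missingBonds {Λ : Finset Site} (η : Config Λ) (C : Finset Site) : ℤ :=
  ∑ x ∈ C.filter (fun x => η.val x = 1), (4 - (bondDeg η x : ℤ))

/- ----------  geometry for the energy-reduction mechanisms ---------- -/

/-- A site is lattice-connecting: there is a n.n. path of empty sites from it to ∂⁻Λ. -/
def LatticeConnecting {Λ : Finset Site} (η : Config Λ) (x : Site) : Prop :=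
  ∃ l : List Site, List.Chain adjacent x l ∧
    (x :: l).getLast (List.cons_ne_nil x l) ∈ intBdry Λ ∧
    ∀ y ∈ l, y ∈ Λ ∧ η.val y = 0

/-- A pending dimer (x,y): a lattice-connecting type-1 particle x whose unique active
bond is with the adjacent type-2 particle y, which has at most three active bonds. -/
def PendingDimer {Λ : Finset Site} (η : Config Λ) (x y : Site) : Prop :=
  bondRel η x y ∧ η.val x = 1 ∧ η.val y = 2 ∧ LatticeConnecting η x ∧
  bondDeg η x = 1 ∧ bondDeg η y ≤ 3

/-- The sites of a horizontal (in dual coordinates) beam of length l: l+1 particles of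
type 1 at mutual dual distance 1, with left-most site p. -/
def beamSites (p : Site) (l : ℕ) : Finset Site :=
  (Finset.range (l + 1)).image (fun i : ℕ => ((p.1 + (i : ℤ), p.2 - (i : ℤ)) : Site))

/-- The center row of the (south) support of the beam. -/
def centerSites (p : Site) (l : ℕ) : Finset Site :=
  (Finset.range l).image (fun i : ℕ => ((p.1 + (i : ℤ), p.2 - 1 - (i : ℤ)) : Site))

/-- The basement row of the (south) support of the beam. -/
def basementSites (p : Site) (l : ℕ) : Finset Site :=
  (Finset.range (l + 1)).image (fun i : ℕ => ((p.1 - 1 + (i : ℤ), p.2 - 1 - (i : ℤ)) : Site))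

/-- The (south) support of a beam/bridge. -/
def bridgeSupport (p : Site) (l : ℕ) : Finset Site :=
  beamSites p l ∪ centerSites p l ∪ basementSites p l

/-- The 12 sites of a slot: a 4×4 block minus its four corner sites; p is the lower-left
corner of the block. -/
def slotSites (p : Site) : Finset Site :=
  ((Finset.range 4 ×ˢ Finset.range 4).image
      (fun ij => ((p.1 + (ij.1 : ℤ), p.2 + (ij.2 : ℤ)) : Site))) \
    {(p.1, p.2), (p.1 + 3, p.2), (p.1, p.2 + 3), (p.1 + 3, p.2 + 3)}

/-- The slot-conjugate (diagonally opposite) ordered pairs of central sites of a slot. -/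
def slotDiagPairs (p : Site) : List (Site × Site) :=
  [((p.1 + 1, p.2 + 1), (p.1 + 2, p.2 + 2)), ((p.1 + 2, p.2 + 2), (p.1 + 1, p.2 + 1)),
   ((p.1 + 1, p.2 + 2), (p.1 + 2, p.2 + 1)), ((p.1 + 2, p.2 + 1), (p.1 + 1, p.2 + 2))]

/-- The type-2 sites of the bar added on side d (0 = north, 1 = south, 2 = east,
3 = west, in dual coordinates) of the m×n dual rectangle with corner p. -/
def sideBar (p : Site) (m n : ℕ) (d : Fin 4) : Finset Site :=
  if d = 0 then dualRect (p.1 + (n : ℤ), p.2 + (n : ℤ)) m 1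
  else if d = 1 then dualRect (p.1 - 1, p.2 - 1) m 1
  else if d = 2 then dualRect (p.1 + (m : ℤ), p.2 - (m : ℤ)) 1 n
  else dualRect (p.1 - 1, p.2 + 1) 1 n

/-- The length of side d of an m×n dual rectangle. -/
def sideLen (m n : ℕ) (d : Fin 4) : ℕ := if (d : ℕ) ≤ 1 then m else n

/-- The type-2 sites left after removing the outermost bar on side d of the m×n dual
rectangle with corner p. -/
def shrunkRect (p : Site) (m n : ℕ) (d : Fin 4) : Finset Site :=
  if d = 0 then dualRect p m (n - 1)
  else if d = 1 then dualRect (p.1 + 1, p.2 + 1) m (n - 1)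
  else if d = 2 then dualRect p (m - 1) n
  else dualRect (p.1 + 1, p.2 - 1) (m - 1) n


/-!
In a single cluster the active bonds alternate between the two types and between the two
parity classes of ℤ², so all particles of type 2 have the same parity and no two of them are
adjacent. Putting type 1 on every site next to a particle of type 2 and emptying all other
sites therefore gives a tb-tiled configuration with the same particles of type 2. Each new
particle of type 1 fills a missing bond of η and costs `Δ1 < U`, so the energy does not
increase; it decreases strictly because η, not being tb-tiled, either misses a bond or has an
isolated particle of type 1, which the new configuration removes.
-/

theorem adjacent_comm {x y : Site} : adjacent x y ↔ adjacent y x := by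
  simp only [adjacent, Int.abs_eq_natAbs]
  omega

theorem mem_nbrs {x y : Site} : y ∈ nbrs x ↔ adjacent x y := by
  obtain ⟨a, b⟩ := x
  obtain ⟨c, d⟩ := y
  simp only [nbrs, adjacent, Finset.mem_insert, Finset.mem_singleton, Prod.mk.injEq,
    Int.abs_eq_natAbs]
  omega

theorem mem_nbrs_comm {x y : Site} : y ∈ nbrs x ↔ x ∈ nbrs y := by
  rw [mem_nbrs, mem_nbrs, adjacent_comm]

theorem card_nbrs (x : Site) : (nbrs x).card = 4 := by
  obtain ⟨a, b⟩ := x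
  rw [nbrs, Finset.card_insert_of_notMem, Finset.card_insert_of_notMem,
    Finset.card_insert_of_notMem, Finset.card_singleton] <;> simp <;> omega

theorem inner1_subset (Λ : Finset Site) : inner1 Λ ⊆ Λ := Finset.sdiff_subset

theorem inner2_subset_inner1 (Λ : Finset Site) : inner2 Λ ⊆ inner1 Λ := Finset.sdiff_subset

theorem nbrs_subset_inner1_of_mem_inner2 {Λ : Finset Site} {x : Site} (hx : x ∈ inner2 Λ) :
    nbrs x ⊆ inner1 Λ := by
  simp only [inner2, intBdry, Finset.mem_sdiff, Finset.mem_filter, not_and, not_not] at hx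
  exact hx.2 hx.1

theorem mem_siteBorder {S : Finset Site} {x : Site} :
    x ∈ siteBorder S ↔ x ∉ S ∧ ∃ y ∈ S, x ∈ nbrs y := by
  simp only [siteBorder, Finset.mem_sdiff, Finset.mem_biUnion]
  tauto

theorem siteBorder_subset_inner1 {Λ S : Finset Site} (hS : S ⊆ inner2 Λ) :
    siteBorder S ⊆ inner1 Λ := fun x hx => by
  obtain ⟨-, y, hy, hxy⟩ := mem_siteBorder.1 hx
  exact nbrs_subset_inner1_of_mem_inner2 (hS hy) hxy

def nbrPairs (S : Finset Site) : Finset (Site × Site) :=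
  S.biUnion fun y => nbrs y ×ˢ {y}

theorem mem_nbrPairs {S : Finset Site} {p : Site × Site} :
    p ∈ nbrPairs S ↔ p.2 ∈ S ∧ p.1 ∈ nbrs p.2 := by
  obtain ⟨x, y⟩ := p
  simp only [nbrPairs, Finset.mem_biUnion, Finset.mem_product, Finset.mem_singleton]
  constructor
  · rintro ⟨y', hy', hx, rfl⟩
    exact ⟨hy', hx⟩
  · rintro ⟨hy, hx⟩
    exact ⟨y, hy, hx, rfl⟩

theorem card_nbrPairs (S : Finset Site) : (nbrPairs S).card = 4 * S.card := by
  rw [nbrPairs, Finset.card_biUnion]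
  · simp only [Finset.card_product, card_nbrs, Finset.card_singleton, Finset.sum_const,
      smul_eq_mul]
    ring
  · intro a _ b _ hab
    simp only [Function.onFun, Finset.disjoint_product, Finset.disjoint_singleton]
    exact Or.inr hab

section Config

variable {Λ : Finset Site}

theorem Config.mem_of_val_ne_zero (η : Config Λ) {x : Site} (hx : η.val x ≠ 0) : x ∈ Λ := by
  by_contra h
  exact hx (η.zero_outside x h)

theorem mem_type2Sites {η : Config Λ} {x : Site} : x ∈ type2Sites η ↔ η.val x = 2 := by
  simp only [type2Sites, Finset.mem_filter, and_iff_right_iff_imp]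
  intro h
  exact η.mem_of_val_ne_zero (by rw [h]; decide)

theorem card_type2Sites (η : Config Λ) : (type2Sites η).card = numType2 η := rfl

theorem mem_siteBorder_type2Sites {η : Config Λ} {x : Site} :
    x ∈ siteBorder (type2Sites η) ↔ η.val x ≠ 2 ∧ ∃ y ∈ nbrs x, η.val y = 2 := by
  simp only [mem_siteBorder, mem_type2Sites, mem_nbrs_comm (x := x)]
  tauto

/-- Active bonds join sites of opposite parity carrying opposite types, so this class is
constant along them. -/
def bondParity (η : Config Λ) (x : Site) : ℤ :=
  (x.1 + x.2 + if η.val x = 2 then 1 else 0) % 2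

theorem bondParity_eq_of_bondRel {η : Config Λ} {x y : Site} (h : bondRel η x y) :
    bondParity η x = bondParity η y := by
  obtain ⟨-, -, hxy, hval⟩ := h
  simp only [adjacent, Int.abs_eq_natAbs] at hxy
  rcases hval with ⟨hx, hy⟩ | ⟨hx, hy⟩ <;> simp [bondParity, hx, hy] <;> omega

theorem bondParity_eq_of_reflTransGen {η : Config Λ} {x y : Site}
    (h : Relation.ReflTransGen (bondRel η) x y) : bondParity η x = bondParity η y := by
  induction h with
  | refl => rfl
  | tail _ hbond ih => exact ih.trans (bondParity_eq_of_bondRel hbond)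

theorem SingleCluster.not_adjacent_of_val_eq_two {η : Config Λ} (h : SingleCluster η)
    {a b : Site} (ha : η.val a = 2) (hb : η.val b = 2) : ¬ adjacent a b := by
  obtain ⟨x₀, -, hx₀⟩ := h
  have hpar : bondParity η a = bondParity η b :=
    (bondParity_eq_of_reflTransGen (hx₀ a (by rw [ha]; decide))).symm.trans
      (bondParity_eq_of_reflTransGen (hx₀ b (by rw [hb]; decide)))
  simp only [bondParity, ha, hb, if_true] at hpar
  simp only [adjacent, Int.abs_eq_natAbs]
  omega

end Config

section Droplet

variable {Λ S : Finset Site}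

def tbDroplet (S : Finset Site) (hS : S ⊆ inner2 Λ) : Config Λ where
  val x := if x ∈ S then 2 else if x ∈ siteBorder S then 1 else 0
  zero_outside x hx := by
    have hxS : x ∉ S := fun h => hx (inner1_subset Λ (inner2_subset_inner1 Λ (hS h)))
    have hxB : x ∉ siteBorder S := fun h => hx (inner1_subset Λ (siteBorder_subset_inner1 hS h))
    simp [hxS, hxB]

theorem tbDroplet_val_eq_two_iff (hS : S ⊆ inner2 Λ) {x : Site} :
    (tbDroplet S hS).val x = 2 ↔ x ∈ S := by
  by_cases hx : x ∈ S <;> by_cases hb : x ∈ siteBorder S <;> simp [tbDroplet, hx, hb]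

theorem tbDroplet_val_eq_one_iff (hS : S ⊆ inner2 Λ) {x : Site} :
    (tbDroplet S hS).val x = 1 ↔ x ∈ siteBorder S := by
  by_cases hx : x ∈ S
  · simpa [tbDroplet, hx] using fun h => (mem_siteBorder.1 h).1 hx
  · by_cases hb : x ∈ siteBorder S <;> simp [tbDroplet, hx, hb]

theorem numType2_tbDroplet (hS : S ⊆ inner2 Λ) : numType2 (tbDroplet S hS) = S.card := by
  unfold numType2
  congr 1
  ext x
  rw [Finset.mem_filter, tbDroplet_val_eq_two_iff]
  exact ⟨And.right, fun hx => ⟨inner1_subset Λ (inner2_subset_inner1 Λ (hS hx)), hx⟩⟩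

theorem numType1_tbDroplet (hS : S ⊆ inner2 Λ) :
    numType1 (tbDroplet S hS) = (siteBorder S).card := by
  unfold numType1
  congr 1
  ext x
  rw [Finset.mem_filter, tbDroplet_val_eq_one_iff]
  exact ⟨And.right, fun hx => ⟨inner1_subset Λ (siteBorder_subset_inner1 hS hx), hx⟩⟩

theorem numBonds_tbDroplet (hS : S ⊆ inner2 Λ) (hsep : ∀ a ∈ S, ∀ b ∈ S, ¬ adjacent a b) :
    numBonds (tbDroplet S hS) = 4 * S.card := by
  rw [← card_nbrPairs]
  unfold numBonds
  congr 1
  ext ⟨x, y⟩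
  simp only [Finset.mem_filter, Finset.mem_product, mem_nbrPairs, tbDroplet_val_eq_one_iff,
    tbDroplet_val_eq_two_iff, mem_siteBorder, mem_nbrs (x := y), adjacent_comm (x := x)]
  constructor
  · rintro ⟨-, hxy, -, hy⟩
    exact ⟨hy, hxy⟩
  · rintro ⟨hy, hxy⟩
    have hx := nbrs_subset_inner1_of_mem_inner2 (hS hy) (mem_nbrs.2 hxy)
    exact ⟨⟨hx, inner2_subset_inner1 Λ (hS hy)⟩, hxy,
      ⟨fun hxS => hsep y hy x hxS hxy, y, hy, mem_nbrs.2 hxy⟩, hy⟩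

theorem tbDroplet_mem_VTiled (hS : S ⊆ inner2 Λ) (hsep : ∀ a ∈ S, ∀ b ∈ S, ¬ adjacent a b) :
    tbDroplet S hS ∈ VTiled Λ S.card := by
  refine ⟨⟨numType2_tbDroplet hS, fun x hx => hS ((tbDroplet_val_eq_two_iff hS).1 hx)⟩,
    numBonds_tbDroplet hS hsep, fun x hx => ?_⟩
  obtain ⟨-, y, hy, hxy⟩ := mem_siteBorder.1 ((tbDroplet_val_eq_one_iff hS).1 hx)
  exact ⟨y, mem_nbrs_comm.1 hxy, (tbDroplet_val_eq_two_iff hS).2 hy⟩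

end Droplet

section Defects

variable {Λ : Finset Site} (η : Config Λ)

def isolatedType1 : Finset Site :=
  Λ.filter fun x => η.val x = 1 ∧ ∀ y ∈ nbrs x, η.val y ≠ 2

/-- Every active bond and every empty site on the border of the type-2 sites uses up its own
ordered pair (neighbour, type-2 site), and there are `4 n₂` such pairs. -/
theorem numBonds_add_card_empty_border_le :
    numBonds η + ((siteBorder (type2Sites η)).filter fun x => η.val x = 0).card
      ≤ 4 * numType2 η := by
  set bonds := (inner1 Λ ×ˢ inner1 Λ).filter
    fun p => adjacent p.1 p.2 ∧ η.val p.1 = 1 ∧ η.val p.2 = 2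
  set P := nbrPairs (type2Sites η)
  set P0 := P.filter fun p => η.val p.1 = 0
  have hbonds : bonds ⊆ P := fun p hp => by
    simp only [bonds, Finset.mem_filter] at hp
    exact mem_nbrPairs.2 ⟨mem_type2Sites.2 hp.2.2.2, mem_nbrs.2 (adjacent_comm.1 hp.2.1)⟩
  have hdisj : Disjoint bonds P0 := by
    refine Finset.disjoint_left.2 fun p hp hp0 => ?_
    simp only [bonds, P0, Finset.mem_filter] at hp hp0
    rw [hp.2.2.1] at hp0
    exact absurd hp0.2 (by decide)
  have hempty : ((siteBorder (type2Sites η)).filter fun x => η.val x = 0) ⊆ P0.image Prod.fst :=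
    fun x hx => by
    obtain ⟨hxB, hx0⟩ := Finset.mem_filter.1 hx
    obtain ⟨-, y, hy, hxy⟩ := mem_siteBorder.1 hxB
    exact Finset.mem_image.2 ⟨(x, y), Finset.mem_filter.2 ⟨mem_nbrPairs.2 ⟨hy, hxy⟩, hx0⟩, rfl⟩
  calc numBonds η + ((siteBorder (type2Sites η)).filter fun x => η.val x = 0).card
      ≤ bonds.card + P0.card :=
        Nat.add_le_add_left ((Finset.card_le_card hempty).trans Finset.card_image_le) _
    _ = (bonds ∪ P0).card := (Finset.card_union_of_disjoint hdisj).symm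
    _ ≤ P.card := Finset.card_le_card (Finset.union_subset hbonds (Finset.filter_subset _ _))
    _ = 4 * numType2 η := card_nbrPairs _

theorem card_siteBorder_type2Sites :
    (siteBorder (type2Sites η)).card =
      ((siteBorder (type2Sites η)).filter fun x => η.val x = 0).card +
      ((siteBorder (type2Sites η)).filter fun x => η.val x = 1).card := by
  rw [← Finset.card_filter_add_card_filter_not (fun x : Site => η.val x = 0)]
  congr 2
  ext x
  simp only [Finset.mem_filter, and_congr_right_iff]
  intro hx
  have h2 := (mem_siteBorder_type2Sites.1 hx).1
  omega

theorem numType1_eq_card_border_add_card_isolated :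
    numType1 η = ((siteBorder (type2Sites η)).filter fun x => η.val x = 1).card +
      (isolatedType1 η).card := by
  rw [numType1, ← Finset.card_filter_add_card_filter_not (· ∈ siteBorder (type2Sites η))]
  congr 2 <;> ext x <;>
    simp only [isolatedType1, Finset.mem_filter, mem_siteBorder_type2Sites, not_and, not_exists]
  · exact ⟨fun h => ⟨h.2, h.1.2⟩,
      fun h => ⟨⟨η.mem_of_val_ne_zero (by rw [h.2]; decide), h.2⟩, h.1⟩⟩
  · constructor
    · rintro ⟨⟨hxΛ, hx1⟩, hiso⟩
      exact ⟨hxΛ, hx1, hiso (by rw [hx1]; decide)⟩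
    · rintro ⟨hxΛ, hx1, hiso⟩
      exact ⟨⟨hxΛ, hx1⟩, fun _ => hiso⟩

variable {η}

theorem numBonds_lt_or_isolatedType1_nonempty {k : ℕ} (hη : η ∈ VStar Λ k)
    (hnot : η ∉ VTiled Λ k) : numBonds η < 4 * k ∨ (isolatedType1 η).Nonempty := by
  by_contra! h
  obtain ⟨hbonds, hiso⟩ := h
  have hle := (Nat.le_add_right _ _).trans (numBonds_add_card_empty_border_le η)
  rw [hη.1] at hle
  refine hnot ⟨hη, le_antisymm hle hbonds, fun x hx => ?_⟩
  by_contra! hx2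
  have hmem : x ∈ isolatedType1 η :=
    Finset.mem_filter.2 ⟨η.mem_of_val_ne_zero (by rw [hx]; decide), hx, hx2⟩
  simp [hiso] at hmem

theorem energy_tbDroplet_lt {U Δ1 Δ2 : ℝ} (hΔ1 : 0 < Δ1) (hΔ1U : Δ1 < U)
    (hS : type2Sites η ⊆ inner2 Λ) (hsep : ∀ a ∈ type2Sites η, ∀ b ∈ type2Sites η, ¬ adjacent a b)
    (hdefect : numBonds η < 4 * numType2 η ∨ (isolatedType1 η).Nonempty) :
    energy U Δ1 Δ2 (tbDroplet _ hS) < energy U Δ1 Δ2 η := by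
  have hcount := numBonds_add_card_empty_border_le η
  replace hdefect : numBonds η + 1 ≤ 4 * numType2 η ∨ 1 ≤ (isolatedType1 η).card :=
    hdefect.imp id Finset.card_pos.2
  simp only [energy, numBonds_tbDroplet hS hsep, numType1_tbDroplet hS, numType2_tbDroplet hS,
    card_type2Sites, card_siteBorder_type2Sites, numType1_eq_card_border_add_card_isolated η]
  generalize numBonds η = B, numType2 η = k, (isolatedType1 η).card = I,
    ((siteBorder (type2Sites η)).filter fun x => η.val x = 0).card = E at *
  have hcount' : (B : ℝ) + E ≤ 4 * k := by exact_mod_cast hcount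
  push_cast
  rcases hdefect with h | h
  · have h' : (B : ℝ) + 1 ≤ 4 * k := by exact_mod_cast h
    linarith [mul_nonneg hΔ1.le (sub_nonneg.2 hcount'), mul_nonneg (sub_nonneg.2 hΔ1U.le)
      (sub_nonneg.2 h'), mul_nonneg hΔ1.le (Nat.cast_nonneg (α := ℝ) I)]
  · have h' : (1 : ℝ) ≤ I := by exact_mod_cast h
    linarith [mul_nonneg hΔ1.le (sub_nonneg.2 hcount'), mul_nonneg (sub_nonneg.2 hΔ1U.le)
      (show (0 : ℝ) ≤ 4 * k - B by linarith [Nat.cast_nonneg (α := ℝ) E]),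
      mul_nonneg hΔ1.le (sub_nonneg.2 h')]

end Defects

theorem single_cluster_tb_tiling_lowers_energy_general
    (U Δ1 Δ2 : ℝ) (hΔ1 : 0 < Δ1) (hΔ1U : Δ1 < U)
    (Λ : Finset Site) (k : ℕ)
    (η : Config Λ) (hη : η ∈ VStar Λ k) (hnot : η ∉ VTiled Λ k)
    (hsc : SingleCluster η) :
    ∃ ηt ∈ VTiled Λ k, energy U Δ1 Δ2 ηt < energy U Δ1 Δ2 η := by
  have hS : type2Sites η ⊆ inner2 Λ := fun x hx => hη.2 x (mem_type2Sites.1 hx)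
  have hsep : ∀ a ∈ type2Sites η, ∀ b ∈ type2Sites η, ¬ adjacent a b := fun a ha b hb =>
    hsc.not_adjacent_of_val_eq_two (mem_type2Sites.1 ha) (mem_type2Sites.1 hb)
  have hdefect := numBonds_lt_or_isolatedType1_nonempty hη hnot
  obtain rfl : numType2 η = k := hη.1
  exact ⟨tbDroplet _ hS, tbDroplet_mem_VTiled hS hsep,
    energy_tbDroplet_lt hΔ1 hΔ1U hS hsep hdefect⟩

/-- for a single-cluster configuration η ∈ V_{*,n₂} ∖ V_{*,n₂}^{4n₂},
there is a tb-tiled configuration η̃ ∈ V_{*,n₂}^{4n₂} with strictly lower energy. -/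
theorem single_cluster_tb_tiling_lowers_energy
    (U Δ1 Δ2 : ℝ) (hU : 0 < U) (hΔ1 : 0 < Δ1) (hΔ1U : Δ1 < U)
    (hgap : 2 * U < Δ2 - Δ1) (hsum : Δ1 + Δ2 < 4 * U)
    (Λ : Finset Site) (k : ℕ) (hk : 1 ≤ k)
    (η : Config Λ) (hη : η ∈ VStar Λ k) (hnot : η ∉ VTiled Λ k)
    (hsc : SingleCluster η) :
    ∃ ηt ∈ VTiled Λ k, energy U Δ1 Δ2 ηt < energy U Δ1 Δ2 η :=
  single_cluster_tb_tiling_lowers_energy_general U Δ1 Δ2 hΔ1 hΔ1U Λ k η hη hnot hsc
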